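/- arXiv:2506.20195 — 6 statements merged into one kernel-verified Lean document; each statement's English description precedes it below -/
import Mathlib

section
/- Let H be a real symmetric n×n matrix and U₀ an n×N real matrix such that U₀ᵀ H U₀ ≤ 0 (negative semidefinite as an N×N matrix). Then for every k > 0 and t ≥ 0, U₀ᵀ exp(−kHt) U₀ ≥ U₀ᵀ U₀ in the positive semidefinite order. -/
/-! Since `exp x ≥ 1 + x` on the spectrum of a symmetric `A`, the functional calculus gives
`exp A ≥ 1 + A`, and congruence by `U₀` yields `U₀ᵀ exp A U₀ ≥ U₀ᵀ U₀ + U₀ᵀ A U₀`. For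
`A = -(k t) H` the last term is `k t • (-(U₀ᵀ H U₀)) ≥ 0`. -/

open Matrix NormedSpace

-- The L2 operator norm only supplies the normed-ring structure that relates `cfc Real.exp` to
-- `NormedSpace.exp`; the latter depends on the topology alone.
open scoped MatrixOrder Matrix.Norms.L2Operator in
theorem Matrix.IsHermitian.posSemidef_exp_sub_one_sub {ι : Type*} [Fintype ι] [DecidableEq ι]
    {A : Matrix ι ι ℝ} (hA : A.IsHermitian) :
    (NormedSpace.exp A - 1 - A).PosSemidef := by
  have hA' : IsSelfAdjoint A := hA
  have hcfc : cfc (fun x => Real.exp x - 1 - x) A = NormedSpace.exp A - 1 - A := by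
    rw [cfc_sub .., cfc_sub .., cfc_const_one .., cfc_id' .., CFC.real_exp_eq_normedSpace_exp]
  rw [← nonneg_iff_posSemidef, ← hcfc]
  exact cfc_nonneg fun x _ => by linarith [Real.add_one_le_exp x]

theorem Matrix.IsHermitian.posSemidef_transpose_mul_exp_mul_sub {ι κ : Type*} [Fintype ι]
    [DecidableEq ι] [Fintype κ] {A : Matrix ι ι ℝ} (hA : A.IsHermitian) (B : Matrix ι κ ℝ)
    (hBAB : (Bᵀ * A * B).PosSemidef) :
    (Bᵀ * NormedSpace.exp A * B - Bᵀ * B).PosSemidef := by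
  have hquad := hA.posSemidef_exp_sub_one_sub.conjTranspose_mul_mul_same B
  convert hquad.add hBAB using 1
  simp only [conjTranspose_eq_transpose_of_trivial, Matrix.mul_sub, Matrix.sub_mul, Matrix.mul_one]
  abel

/-- If `U₀ᵀ H U₀ ≤ 0` (negative semidefinite) with `H` real symmetric, then for every
`k > 0` and `t ≥ 0`, `U₀ᵀ exp(−kHt) U₀ ≥ U₀ᵀ U₀` in the positive semidefinite order. -/
theorem stmt_2 {n N : ℕ} (H : Matrix (Fin n) (Fin n) ℝ) (hH : H.IsSymm)
    (U₀ : Matrix (Fin n) (Fin N) ℝ)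
    (hneg : (-(U₀ᵀ * H * U₀)).PosSemidef)
    (k t : ℝ) (hk : 0 < k) (ht : 0 ≤ t) :
    (U₀ᵀ * exp ((-(k * t)) • H) * U₀ - U₀ᵀ * U₀).PosSemidef := by
  have hHerm : ((-(k * t)) • H).IsHermitian := isHermitian_iff_isSymm.mpr (hH.smul _)
  refine hHerm.posSemidef_transpose_mul_exp_mul_sub U₀ ?_
  rw [Matrix.mul_smul, Matrix.smul_mul, neg_smul, ← smul_neg]
  exact hneg.smul (mul_nonneg hk.le ht)
end

section
/- Let H be a real symmetric n×n matrix and U₀ ∈ ℝ^{n×N} with U₀ᵀ H U₀ < 0 (negative definite). Then the smallest eigenvalue of U₀ᵀ exp(−kHt) U₀ satisfies λ_min(U₀ᵀ exp(−kHt) U₀) ≥ λ_min(U₀ᵀ U₀) · exp(k|h₀|t) for all t ≥ 0, where h₀ = sup_{a ≠ 0} (aᵀ U₀ᵀ H U₀ a)/‖U₀ a‖² < 0. -/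
/-!
Diagonalise `H = V diag(λ) Vᵀ` with `V` orthogonal. For `x = U₀ a`, with eigencoordinates
`c = Vᵀ x`, the quadratic form `xᵀ exp(-ktH) x = ∑ exp(-kt λᵢ) cᵢ²` is, by Jensen's inequality for
`exp` with weights `cᵢ²`, at least `‖x‖² exp(-kt · xᵀHx / ‖x‖²)`. The Rayleigh quotient
`xᵀHx / ‖x‖²` is at most `h₀ < 0`, so this is at least `‖x‖² exp(kt|h₀|)`, and for a unit vector
`a` we have `‖x‖² = aᵀ U₀ᵀ U₀ a ≥ λ_min(U₀ᵀ U₀)`.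
-/

open Matrix NormedSpace

/-- The smallest eigenvalue of a symmetric matrix, characterized as the infimum of the
Rayleigh quotient over unit vectors. -/
noncomputable def minEig {N : ℕ} (M : Matrix (Fin N) (Fin N) ℝ) : ℝ :=
  sInf {r : ℝ | ∃ a : Fin N → ℝ, a ⬝ᵥ a = 1 ∧ r = a ⬝ᵥ (M *ᵥ a)}

theorem Real.sum_mul_exp_weighted_mean_le {ι : Type*} (s : Finset ι) (w μ : ι → ℝ)
    (hw : ∀ i ∈ s, 0 ≤ w i) :
    (∑ i ∈ s, w i) * Real.exp ((∑ i ∈ s, μ i * w i) / ∑ i ∈ s, w i) ≤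
      ∑ i ∈ s, Real.exp (μ i) * w i := by
  rcases (Finset.sum_nonneg hw).eq_or_lt with hW | hW
  · rw [← hW, zero_mul]
    exact Finset.sum_nonneg fun i hi => mul_nonneg (Real.exp_pos _).le (hw i hi)
  · have h := convexOn_exp.map_centerMass_le hw hW fun i _ => Set.mem_univ (μ i)
    simp only [Finset.centerMass, smul_eq_mul, ← div_eq_inv_mul, mul_comm (w _)] at h
    rwa [le_div_iff₀' hW] at h

section

variable {m p : Type*} [Fintype m] [Fintype p]

theorem Matrix.dotProduct_mulVec_transpose_mul_mul (U : Matrix m p ℝ) (M : Matrix m m ℝ)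
    (a : p → ℝ) : a ⬝ᵥ ((Uᵀ * M * U) *ᵥ a) = (U *ᵥ a) ⬝ᵥ (M *ᵥ (U *ᵥ a)) := by
  rw [← mulVec_mulVec, ← mulVec_mulVec, dotProduct_mulVec, vecMul_transpose]

theorem Matrix.dotProduct_mulVec_mul_diagonal_mul_transpose [DecidableEq p] (V : Matrix m p ℝ)
    (d : p → ℝ) (x : m → ℝ) : x ⬝ᵥ ((V * diagonal d * Vᵀ) *ᵥ x) = ∑ i, d i * (Vᵀ *ᵥ x) i ^ 2 := by
  rw [← mulVec_mulVec, ← mulVec_mulVec, dotProduct_mulVec, ← mulVec_transpose]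
  simp only [dotProduct, mulVec_diagonal]
  exact Finset.sum_congr rfl fun i _ => by ring

end

namespace Matrix.IsHermitian

variable {m : Type*} [Fintype m] [DecidableEq m] {H : Matrix m m ℝ} (hH : H.IsHermitian)

local notation "V" => (hH.eigenvectorUnitary : Matrix m m ℝ)

theorem mul_transpose_eigenvectorUnitary : V * Vᵀ = 1 :=
  mem_unitaryGroup_iff.mp hH.eigenvectorUnitary.2

theorem eq_mul_diagonal_mul_transpose : H = V * diagonal hH.eigenvalues * Vᵀ :=
  hH.spectral_theorem

theorem exp_smul_eq (s : ℝ) :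
    NormedSpace.exp (s • H) = V * diagonal (fun i => Real.exp (s * hH.eigenvalues i)) * Vᵀ := by
  have hVinv : V⁻¹ = Vᵀ := inv_eq_right_inv hH.mul_transpose_eigenvectorUnitary
  conv_lhs => rw [hH.eq_mul_diagonal_mul_transpose]
  rw [← Matrix.smul_mul, ← Matrix.mul_smul, ← diagonal_smul, ← hVinv,
    exp_conj V _ Unitary.isUnit_coe, exp_diagonal, Pi.exp_def]
  simp [Real.exp_eq_exp_ℝ]

theorem dotProduct_self_eq_sum (x : m → ℝ) : x ⬝ᵥ x = ∑ i, (Vᵀ *ᵥ x) i ^ 2 := by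
  simpa [hH.mul_transpose_eigenvectorUnitary] using
    dotProduct_mulVec_mul_diagonal_mul_transpose V (fun _ => 1) x

theorem dotProduct_mulVec_eq_sum (x : m → ℝ) :
    x ⬝ᵥ (H *ᵥ x) = ∑ i, hH.eigenvalues i * (Vᵀ *ᵥ x) i ^ 2 := by
  conv_lhs => rw [hH.eq_mul_diagonal_mul_transpose]
  exact dotProduct_mulVec_mul_diagonal_mul_transpose V _ x

theorem dotProduct_exp_smul_mulVec_eq_sum (s : ℝ) (x : m → ℝ) :
    x ⬝ᵥ (NormedSpace.exp (s • H) *ᵥ x) =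
      ∑ i, Real.exp (s * hH.eigenvalues i) * (Vᵀ *ᵥ x) i ^ 2 := by
  rw [hH.exp_smul_eq]
  exact dotProduct_mulVec_mul_diagonal_mul_transpose V _ x

end Matrix.IsHermitian

theorem Matrix.IsHermitian.dotProduct_self_mul_exp_le {m : Type*} [Fintype m] [DecidableEq m]
    {H : Matrix m m ℝ} (hH : H.IsHermitian) (s : ℝ) (x : m → ℝ) :
    (x ⬝ᵥ x) * Real.exp (s * (x ⬝ᵥ (H *ᵥ x)) / (x ⬝ᵥ x)) ≤
      x ⬝ᵥ (NormedSpace.exp (s • H) *ᵥ x) := by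
  set c := (hH.eigenvectorUnitary : Matrix m m ℝ)ᵀ *ᵥ x
  have h := Real.sum_mul_exp_weighted_mean_le Finset.univ (fun i => c i ^ 2)
    (fun i => s * hH.eigenvalues i) fun i _ => sq_nonneg _
  rw [hH.dotProduct_self_eq_sum, hH.dotProduct_mulVec_eq_sum, hH.dotProduct_exp_smul_mulVec_eq_sum,
    Finset.mul_sum]
  simpa only [mul_assoc] using h

-- For `N = 0` the defining set is empty and `minEig M = sInf ∅ = 0`.
theorem le_minEig {N : ℕ} [NeZero N] {M : Matrix (Fin N) (Fin N) ℝ} {c : ℝ}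
    (h : ∀ a : Fin N → ℝ, a ⬝ᵥ a = 1 → c ≤ a ⬝ᵥ (M *ᵥ a)) : c ≤ minEig M :=
  le_csInf ⟨_, Pi.single 0 1, by simp, rfl⟩ fun _ ⟨a, ha, hr⟩ => hr ▸ h a ha

theorem Matrix.PosSemidef.minEig_le {N : ℕ} {M : Matrix (Fin N) (Fin N) ℝ} (hM : M.PosSemidef)
    {a : Fin N → ℝ} (ha : a ⬝ᵥ a = 1) : minEig M ≤ a ⬝ᵥ (M *ᵥ a) :=
  csInf_le ⟨0, fun _ ⟨b, _, hr⟩ => hr ▸ by simpa using hM.dotProduct_mulVec_nonneg b⟩ ⟨a, ha, rfl⟩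

theorem stmt_3_general {n N : ℕ} (H : Matrix (Fin n) (Fin n) ℝ) (hH : H.IsSymm)
    (U₀ : Matrix (Fin n) (Fin N) ℝ)
    (k : ℝ) (hk : 0 < k)
    (h₀ : ℝ)
    (hh₀ : IsLUB {r : ℝ | ∃ a : Fin N → ℝ, a ≠ 0 ∧
        r = (a ⬝ᵥ ((U₀ᵀ * H * U₀) *ᵥ a)) / ((U₀ *ᵥ a) ⬝ᵥ (U₀ *ᵥ a))} h₀)
    (hh₀neg : h₀ < 0) :
    ∀ t ≥ (0:ℝ),
      minEig (U₀ᵀ * U₀) * Real.exp (k * |h₀| * t) ≤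
        minEig (U₀ᵀ * NormedSpace.exp ((-(k * t)) • H) * U₀) := by
  intro t ht
  obtain ⟨-, b, hb, -⟩ := hh₀.nonempty
  have : NeZero N := ⟨by rintro rfl; exact hb (Subsingleton.elim _ _)⟩
  refine le_minEig fun a ha => ?_
  have ha0 : a ≠ 0 := by rintro rfl; simp at ha
  set x := U₀ *ᵥ a
  have hq : x ⬝ᵥ (H *ᵥ x) / (x ⬝ᵥ x) ≤ h₀ :=
    hh₀.1 ⟨a, ha0, by rw [dotProduct_mulVec_transpose_mul_mul]⟩
  have hexponent : k * |h₀| * t ≤ -(k * t) * (x ⬝ᵥ (H *ᵥ x)) / (x ⬝ᵥ x) := by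
    rw [abs_of_neg hh₀neg, mul_div_assoc]
    nlinarith [mul_nonneg hk.le ht]
  rw [dotProduct_mulVec_transpose_mul_mul]
  calc minEig (U₀ᵀ * U₀) * Real.exp (k * |h₀| * t)
      ≤ (x ⬝ᵥ x) * Real.exp (k * |h₀| * t) := by
        gcongr
        have h := (posSemidef_conjTranspose_mul_self U₀).minEig_le ha
        rwa [conjTranspose_eq_transpose_of_trivial, ← mulVec_mulVec, dotProduct_mulVec,
          vecMul_transpose] at h
    _ ≤ (x ⬝ᵥ x) * Real.exp (-(k * t) * (x ⬝ᵥ (H *ᵥ x)) / (x ⬝ᵥ x)) := by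
        gcongr
        exact Finset.sum_nonneg fun i _ => mul_self_nonneg (x i)
    _ ≤ x ⬝ᵥ (NormedSpace.exp (-(k * t) • H) *ᵥ x) :=
        (isHermitian_iff_isSymm.mpr hH).dotProduct_self_mul_exp_le _ x

/-- If `U₀ᵀ H U₀ < 0` (negative definite) with `H` real symmetric, then
`λ_min(U₀ᵀ exp(−kHt) U₀) ≥ λ_min(U₀ᵀU₀) · exp(k|h₀|t)` for all `t ≥ 0`, where
`h₀ = sup_{a ≠ 0} (aᵀ U₀ᵀ H U₀ a)/‖U₀ a‖² < 0`. -/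
theorem stmt_3 {n N : ℕ} (H : Matrix (Fin n) (Fin n) ℝ) (hH : H.IsSymm)
    (U₀ : Matrix (Fin n) (Fin N) ℝ)
    (hneg : (-(U₀ᵀ * H * U₀)).PosDef)
    (k : ℝ) (hk : 0 < k)
    (h₀ : ℝ)
    (hh₀ : IsLUB {r : ℝ | ∃ a : Fin N → ℝ, a ≠ 0 ∧
        r = (a ⬝ᵥ ((U₀ᵀ * H * U₀) *ᵥ a)) / ((U₀ *ᵥ a) ⬝ᵥ (U₀ *ᵥ a))} h₀)
    (hh₀neg : h₀ < 0) :
    ∀ t ≥ (0:ℝ),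
      minEig (U₀ᵀ * U₀) * Real.exp (k * |h₀| * t) ≤
        minEig (U₀ᵀ * NormedSpace.exp ((-(k * t)) • H) * U₀) :=
  stmt_3_general H hH U₀ k hk h₀ hh₀ hh₀neg
end

section
/- Let Λ = diag(λ₁,…,λ_m) be a real diagonal m×m matrix and α₀ ∈ ℝ^{m×N} such that the matrix M(t) := I_N − α₀ᵀα₀ + α₀ᵀ exp(−2Λt) α₀ is invertible for all t ≥ 0. Then α(t) := exp(−Λt) α₀ M(t)^{−1/2} satisfies the Oja flow equation dα/dt = −(Λα − α αᵀ Λ α) up to right multiplication by a time-dependent orthogonal matrix; equivalently, the symmetric matrix Z(t) := α(t)α(t)ᵀ = exp(−Λt) α₀ M(t)^{−1} α₀ᵀ exp(−Λt) satisfies dZ/dt = −(ΛZ + ZΛ − 2ZΛZ). -/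
open Matrix NormedSpace

/-!
Write `E(t) = exp(-tΛ)` and `G(t) = α₀ M(t)⁻¹ α₀ᵀ`, so that `Z = E G E` and
`M = I - α₀ᵀα₀ + α₀ᵀ E² α₀`. Since `E' = -ΛE` and `Λ` commutes with `E`, we get
`M' = -2 α₀ᵀ Λ E² α₀`, hence `G' = -α₀ M⁻¹ M' M⁻¹ α₀ᵀ = 2 G Λ E² G`, and the product rule gives
`Z' = -ΛZ - ZΛ + 2 (EGE) Λ (EGE)`.
-/

section Calculus

variable {𝕜 : Type*} [NontriviallyNormedField 𝕜] {l m n : Type*} [Fintype m] [Fintype n]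

theorem HasDerivAt.matrix_apply {f : 𝕜 → Matrix l n 𝕜} {f' : Matrix l n 𝕜} {t : 𝕜}
    (hf : HasDerivAt f f' t) (i : l) (j : n) : HasDerivAt (fun s => f s i j) (f' i j) t :=
  hasDerivAt_pi.1 (hasDerivAt_pi.1 hf i) j

theorem HasDerivAt.matrix_mul {f : 𝕜 → Matrix l m 𝕜} {g : 𝕜 → Matrix m n 𝕜}
    {f' : Matrix l m 𝕜} {g' : Matrix m n 𝕜} {t : 𝕜}
    (hf : HasDerivAt f f' t) (hg : HasDerivAt g g' t) :
    HasDerivAt (fun s => f s * g s) (f' * g t + f t * g') t := by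
  refine hasDerivAt_pi.2 fun i => hasDerivAt_pi.2 fun j => ?_
  change HasDerivAt (fun s => ∑ k, f s i k * g s k j)
    (∑ k, f' i k * g t k j + ∑ k, f t i k * g' k j) t
  rw [← Finset.sum_add_distrib]
  exact HasDerivAt.fun_sum fun k _ => (hf.matrix_apply i k).mul (hg.matrix_apply k j)

end Calculus

section NormedRing

variable {𝕜 : Type*} [RCLike 𝕜] {n : Type*} [Fintype n] [DecidableEq n]

theorem HasDerivAt.matrix_inv {f : 𝕜 → Matrix n n 𝕜} {f' : Matrix n n 𝕜} {t : 𝕜}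
    (hf : HasDerivAt f f' t) (ht : IsUnit (f t)) :
    HasDerivAt (fun s => (f s)⁻¹) (-((f t)⁻¹ * f' * (f t)⁻¹)) t := by
  let _ : SeminormedRing (Matrix n n 𝕜) := Matrix.linftyOpSemiNormedRing
  let _ : NormedRing (Matrix n n 𝕜) := Matrix.linftyOpNormedRing
  let _ : NormedAlgebra 𝕜 (Matrix n n 𝕜) := Matrix.linftyOpNormedAlgebra
  have := FiniteDimensional.proper_rclike 𝕜 (Matrix n n 𝕜)
  have h := hasFDerivAt_ringInverse (𝕜 := 𝕜) ht.unit
  rw [ht.unit_spec] at h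
  have h' := h.comp_hasDerivAt t hf
  simp only [Function.comp_def, ← Ring.inverse_unit, ht.unit_spec] at h'
  simp only [nonsing_inv_eq_ringInverse]
  exact h'

theorem Matrix.hasDerivAt_exp_neg_smul (A : Matrix n n 𝕜) (t : 𝕜) :
    HasDerivAt (fun s => exp ((-s) • A)) (-(A * exp ((-t) • A))) t := by
  let _ : SeminormedRing (Matrix n n 𝕜) := Matrix.linftyOpSemiNormedRing
  let _ : NormedRing (Matrix n n 𝕜) := Matrix.linftyOpNormedRing
  let _ : NormedAlgebra 𝕜 (Matrix n n 𝕜) := Matrix.linftyOpNormedAlgebra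
  have := FiniteDimensional.proper_rclike 𝕜 (Matrix n n 𝕜)
  have h := (hasDerivAt_exp_smul_const' A (-t)).scomp t (hasDerivAt_neg t)
  simp only [Function.comp_def, neg_one_smul] at h
  exact h

end NormedRing

section Riccati

attribute [local instance] Matrix.normedAddCommGroup Matrix.normedSpace

variable {𝕜 : Type*} [RCLike 𝕜] {m N : Type*} [Fintype m] [Fintype N] [DecidableEq N]
  (Λ : Matrix m m 𝕜) (A : Matrix m N 𝕜) (B : Matrix N m 𝕜) (C : Matrix N N 𝕜)

theorem hasDerivAt_riccati {E : 𝕜 → Matrix m m 𝕜} {M : 𝕜 → Matrix N N 𝕜}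
    {Z : 𝕜 → Matrix m m 𝕜} {t : 𝕜} (hE : HasDerivAt E (-(Λ * E t)) t) (hΛE : Commute Λ (E t))
    (hM : ∀ s, M s = C + B * (E s * E s) * A) (hMt : IsUnit (M t))
    (hZ : ∀ s, Z s = E s * A * (M s)⁻¹ * B * E s) :
    HasDerivAt Z (-(Λ * Z t + Z t * Λ - 2 • (Z t * Λ * Z t))) t := by
  have swap (X : Matrix m m 𝕜) : E t * (Λ * X) = Λ * (E t * X) := by
    rw [← Matrix.mul_assoc, ← hΛE.eq, Matrix.mul_assoc]
  have hEE : HasDerivAt (fun s => E s * E s) (-(2 • (Λ * (E t * E t)))) t :=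
    (hE.matrix_mul hE).congr_deriv <| by
      simp only [two_smul, Matrix.neg_mul, Matrix.mul_neg, Matrix.mul_assoc, swap, neg_add]
  have hM' : HasDerivAt M (-(2 • (B * (Λ * (E t * E t)) * A))) t := by
    rw [funext hM]
    refine ((((hasDerivAt_const t B).matrix_mul hEE).matrix_mul
      (hasDerivAt_const t A)).const_add C).congr_deriv ?_
    simp only [Matrix.zero_mul, Matrix.mul_zero, zero_add, add_zero, Matrix.mul_neg,
      Matrix.neg_mul, Matrix.mul_smul, Matrix.smul_mul]
  set G := A * (M t)⁻¹ * B
  have hG : HasDerivAt (fun s => A * (M s)⁻¹ * B) (2 • (G * Λ * (E t * E t) * G)) t := by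
    refine (((hasDerivAt_const t A).matrix_mul (hM'.matrix_inv hMt)).matrix_mul
      (hasDerivAt_const t B)).congr_deriv ?_
    simp only [G, Matrix.zero_mul, Matrix.mul_zero, zero_add, add_zero, Matrix.mul_assoc,
      Matrix.mul_neg, Matrix.neg_mul, neg_neg, Matrix.mul_smul, Matrix.smul_mul]
  have hZG : Z = fun s => E s * (A * (M s)⁻¹ * B) * E s :=
    funext fun s => by simp only [hZ, Matrix.mul_assoc]
  rw [hZG]
  refine ((hE.matrix_mul hG).matrix_mul hE).congr_deriv ?_
  simp only [G, Matrix.mul_assoc, Matrix.add_mul, Matrix.neg_mul, Matrix.mul_neg,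
    Matrix.mul_smul, Matrix.smul_mul, hΛE.eq.symm]
  abel

end Riccati

/-- Let `Λ = diagonal d` and `α₀ ∈ ℝ^{m×N}` be such that
`M(t) = I − α₀ᵀα₀ + α₀ᵀ exp(−2Λt) α₀` is invertible for all `t ≥ 0`.  Then
`Z(t) = exp(−Λt) α₀ M(t)⁻¹ α₀ᵀ exp(−Λt)` satisfies `dZ/dt = −(ΛZ + ZΛ − 2ZΛZ)`
(entrywise derivative). -/
theorem stmt_4 {m N : ℕ} (d : Fin m → ℝ) (α₀ : Matrix (Fin m) (Fin N) ℝ)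
    (M : ℝ → Matrix (Fin N) (Fin N) ℝ)
    (hM : ∀ t : ℝ, M t = 1 - α₀ᵀ * α₀ + α₀ᵀ * NormedSpace.exp ((-(2 * t)) • diagonal d) * α₀)
    (hMinv : ∀ t ≥ (0:ℝ), IsUnit (M t))
    (Z : ℝ → Matrix (Fin m) (Fin m) ℝ)
    (hZ : ∀ t : ℝ, Z t =
      NormedSpace.exp ((-t) • diagonal d) * α₀ * (M t)⁻¹ * α₀ᵀ * NormedSpace.exp ((-t) • diagonal d)) :
    ∀ t ≥ (0:ℝ), ∀ i j : Fin m,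
      HasDerivWithinAt (fun s => Z s i j)
        ((-(diagonal d * Z t + Z t * diagonal d - 2 • (Z t * diagonal d * Z t))) i j)
        (Set.Ici 0) t := by
  intro t ht i j
  have hexp_two (s : ℝ) : exp ((-(2 * s)) • diagonal d) =
      exp ((-s) • diagonal d) * exp ((-s) • diagonal d) := by
    rw [show (-(2 * s)) • diagonal d = 2 • ((-s) • diagonal d) by module, Matrix.exp_nsmul, sq]
  have hZt := hasDerivAt_riccati (diagonal d) α₀ α₀ᵀ (1 - α₀ᵀ * α₀)
    (Matrix.hasDerivAt_exp_neg_smul (diagonal d) t)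
    (((Commute.refl _).smul_right _).exp_right) (fun s => by rw [hM, hexp_two]) (hMinv t ht) hZ
  exact (hZt.matrix_apply i j).hasDerivWithinAt
end

section
/- If a C¹ solution U(t) of dU/dt = −(HU − U UᵀHU) (H real symmetric n×n) satisfies U(0)ᵀU(0) = I_N, then U(t)ᵀU(t) = I_N for all t ≥ 0. -/
/-!
Along the flow, the Gram defect `G = UᵀU - I` obeys the linear equation `G' = AG + GA` with
`A = UᵀHU`; this is where the symmetry of `H` enters. On a compact time interval `A` is bounded in
a submultiplicative matrix norm, so `‖G'‖ ≤ 2C‖G‖`, and Grönwall's inequality forces `G ≡ 0` from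
`G(0) = 0`.
-/

open Matrix Set

theorem eq_zero_of_hasDerivWithinAt_mul_add_mul {R : Type*} [NormedRing R] [NormedAlgebra ℝ R]
    {G A : ℝ → R} {a b C : ℝ} (hG : ContinuousOn G (Icc a b))
    (hG' : ∀ x ∈ Ico a b, HasDerivWithinAt G (A x * G x + G x * A x) (Ici x) x)
    (hA : ∀ x ∈ Ico a b, ‖A x‖ ≤ C) (ha : G a = 0) :
    ∀ x ∈ Icc a b, G x = 0 :=
  eq_zero_of_abs_deriv_le_mul_abs_self_of_eq_zero_right hG hG' ha fun x hx =>
    calc ‖A x * G x + G x * A x‖ ≤ ‖A x‖ * ‖G x‖ + ‖G x‖ * ‖A x‖ :=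
          (norm_add_le _ _).trans (add_le_add (norm_mul_le _ _) (norm_mul_le _ _))
      _ ≤ (2 * C) * ‖G x‖ := by nlinarith [hA x hx, norm_nonneg (G x)]

namespace Matrix

variable {l m n : Type*}

section Deriv

variable {𝕜 : Type*} [NontriviallyNormedField 𝕜] {s : Set 𝕜} {t : 𝕜}

theorem hasDerivWithinAt_mul_apply [Fintype m] {A : 𝕜 → Matrix l m 𝕜} {B : 𝕜 → Matrix m n 𝕜}
    {A' : Matrix l m 𝕜} {B' : Matrix m n 𝕜}
    (hA : ∀ i j, HasDerivWithinAt (fun x => A x i j) (A' i j) s t)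
    (hB : ∀ i j, HasDerivWithinAt (fun x => B x i j) (B' i j) s t) (i : l) (j : n) :
    HasDerivWithinAt (fun x => (A x * B x) i j) ((A' * B t + A t * B') i j) s t := by
  simp only [mul_apply, add_apply, ← Finset.sum_add_distrib]
  exact HasDerivWithinAt.fun_sum fun k _ => (hA i k).mul (hB k j)

attribute [local instance] Matrix.linftyOpNormedAddCommGroup Matrix.linftyOpNormedSpace

theorem hasDerivWithinAt_of_apply [CompleteSpace 𝕜] [Fintype m] [Fintype n]
    {F : 𝕜 → Matrix m n 𝕜} {F' : Matrix m n 𝕜}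
    (h : ∀ i j, HasDerivWithinAt (fun x => F x i j) (F' i j) s t) :
    HasDerivWithinAt F F' s t := by
  have hpi : HasDerivWithinAt (fun x i j => F x i j) (fun i j => F' i j) s t :=
    hasDerivWithinAt_pi.2 fun i => hasDerivWithinAt_pi.2 (h i)
  exact ((ofLinearEquiv 𝕜).toContinuousLinearEquiv :
    (m → n → 𝕜) ≃L[𝕜] Matrix m n 𝕜).hasFDerivAt.comp_hasDerivWithinAt t hpi

end Deriv

section Gronwall

attribute [local instance] Matrix.linftyOpNormedAddCommGroup Matrix.linftyOpNormedSpace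
  Matrix.linftyOpNormedRing Matrix.linftyOpNormedAlgebra

theorem eq_zero_of_hasDerivWithinAt_apply_mul_add_mul [Fintype m] [DecidableEq m]
    {G A : ℝ → Matrix m m ℝ} {a b : ℝ} (hA : ContinuousOn A (Icc a b))
    (hG : ContinuousOn G (Icc a b))
    (hG' : ∀ x ∈ Ico a b, ∀ i j,
      HasDerivWithinAt (fun y => G y i j) ((A x * G x + G x * A x) i j) (Ici x) x)
    (ha : G a = 0) :
    ∀ x ∈ Icc a b, G x = 0 := by
  obtain ⟨C, hC⟩ := isCompact_Icc.exists_bound_of_continuousOn hA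
  exact _root_.eq_zero_of_hasDerivWithinAt_mul_add_mul hG
    (fun x hx => hasDerivWithinAt_of_apply (hG' x hx)) (fun x hx => hC x (Ico_subset_Icc_self hx)) ha

end Gronwall

def quasiGrassmannField {R : Type*} [CommRing R] [Fintype m] [Fintype n] (H : Matrix m m R)
    (U : Matrix m n R) : Matrix m n R :=
  -(H * U - U * (Uᵀ * H * U))

theorem IsSymm.transpose_quasiGrassmannField_mul_add {R : Type*} [CommRing R] [Fintype m]
    [Fintype n] [DecidableEq n] {H : Matrix m m R} (hH : H.IsSymm) (U : Matrix m n R) :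
    (quasiGrassmannField H U)ᵀ * U + Uᵀ * quasiGrassmannField H U
      = Uᵀ * H * U * (Uᵀ * U - 1) + (Uᵀ * U - 1) * (Uᵀ * H * U) := by
  simp only [quasiGrassmannField, transpose_neg, transpose_sub, transpose_mul,
    transpose_transpose, hH.eq, Matrix.neg_mul, Matrix.mul_neg, Matrix.sub_mul, Matrix.mul_sub,
    Matrix.mul_one, Matrix.one_mul, Matrix.mul_assoc]
  abel

end Matrix

/-- Orthonormality is preserved by the quasi-Grassmannian gradient flow:
if `U(0)ᵀU(0) = I`, then `U(t)ᵀU(t) = I` for all `t ≥ 0`. -/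
theorem stmt_7 {n N : ℕ} (H : Matrix (Fin n) (Fin n) ℝ) (hH : H.IsSymm)
    (U : ℝ → Matrix (Fin n) (Fin N) ℝ)
    (hflow : ∀ t ≥ (0:ℝ), ∀ i j,
      HasDerivWithinAt (fun s => U s i j)
        ((-(H * U t - U t * ((U t)ᵀ * H * U t))) i j) (Set.Ici 0) t)
    (h0 : (U 0)ᵀ * U 0 = 1) :
    ∀ t ≥ (0:ℝ), (U t)ᵀ * U t = 1 := by
  intro b hb
  have hU : ContinuousOn U (Icc 0 b) := continuousOn_pi.2 fun i => continuousOn_pi.2 fun j t ht =>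
    (hflow t ht.1 i j).continuousWithinAt.mono Icc_subset_Ici_self
  have hgram : ∀ t ≥ (0:ℝ), ∀ i j,
      HasDerivWithinAt (fun s => ((U s)ᵀ * U s - 1 : Matrix (Fin N) (Fin N) ℝ) i j)
        (((U t)ᵀ * H * U t * ((U t)ᵀ * U t - 1) + ((U t)ᵀ * U t - 1) * ((U t)ᵀ * H * U t) :
          Matrix (Fin N) (Fin N) ℝ) i j) (Ici 0) t := by
    intro t ht i j
    rw [← hH.transpose_quasiGrassmannField_mul_add]
    exact (hasDerivWithinAt_mul_apply (fun i j => hflow t ht j i) (hflow t ht) i j).sub_const _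
  have hgram_eq_zero := eq_zero_of_hasDerivWithinAt_apply_mul_add_mul
    (A := fun s => (U s)ᵀ * H * U s) (G := fun s => (U s)ᵀ * U s - 1)
    ((by fun_prop : Continuous fun M : Matrix (Fin n) (Fin N) ℝ => Mᵀ * H * M).comp_continuousOn hU)
    ((by fun_prop : Continuous fun M : Matrix (Fin n) (Fin N) ℝ => Mᵀ * M - 1).comp_continuousOn hU)
    (fun x hx i j => (hgram x hx.1 i j).mono (Ici_subset_Ici.2 hx.1)) (sub_eq_zero.2 h0)
  exact sub_eq_zero.1 (hgram_eq_zero b ⟨hb, le_rfl⟩)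
end

section
/- Let H be real symmetric n×n and U ∈ ℝ^{n×N}. Then ‖∇_G E(U)‖_F² − tr((HU)ᵀ ∇_G E(U)) = −tr[(UᵀHU)²(I_N − UᵀU)] − tr((HU)ᵀ U Uᵀ ∇_{G̃}E(U)), where ∇_G E(U) = HU − U UᵀHU and ∇_{G̃}E(U) = HU UᵀU − U UᵀHU; moreover the last trace vanishes, so ‖∇_G E(U)‖_F² − tr((HU)ᵀ∇_G E(U)) = −tr[(UᵀHU)²(I_N − UᵀU)]. -/
/-!
With `A = UᵀHU` (symmetric, as `H` is) and `G = UᵀU`, put `X = HU − UA`. Then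
`‖X‖² − tr((HU)ᵀX) = tr((X − HU)ᵀX) = −tr(AUᵀX) = −tr(A²) + tr(AGA)`, and `tr(AGA) = tr(A²G)`
by cyclicity of the trace. The same cyclicity makes `tr((HU)ᵀUUᵀ(HUG − UA)) = tr(A²G) − tr(AGA)`
vanish.
-/

open Matrix

/-- Frobenius norm of a real matrix. -/
noncomputable def frobNorm {n N : ℕ} (A : Matrix (Fin n) (Fin N) ℝ) : ℝ :=
  Real.sqrt (Matrix.trace (Aᵀ * A))

theorem frobNorm_sq {n N : ℕ} (A : Matrix (Fin n) (Fin N) ℝ) :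
    frobNorm A ^ 2 = trace (Aᵀ * A) :=
  Real.sq_sqrt <| by
    simpa using (posSemidef_conjTranspose_mul_self A).trace_nonneg

namespace Matrix

variable {R m k : Type*} [Fintype m] [CommRing R]

theorem isSymm_transpose_mul_mul (U : Matrix m k R) {H : Matrix m m R} (hH : H.IsSymm) :
    (Uᵀ * H * U).IsSymm := by
  rw [IsSymm, transpose_mul, transpose_mul, hH.eq, transpose_transpose, Matrix.mul_assoc]

variable [Fintype k]

theorem trace_transpose_mul_mul_transpose_mul_sub_eq_zero {H : Matrix m m R} (hH : H.IsSymm)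
    (U : Matrix m k R) :
    trace ((H * U)ᵀ * U * Uᵀ * (H * U * (Uᵀ * U) - U * (Uᵀ * H * U))) = 0 :=
  calc trace ((H * U)ᵀ * U * Uᵀ * (H * U * (Uᵀ * U) - U * (Uᵀ * H * U)))
      = trace ((Uᵀ * H * U) * (Uᵀ * H * U) * (Uᵀ * U))
        - trace ((Uᵀ * H * U) * (Uᵀ * U) * (Uᵀ * H * U)) := by
        rw [transpose_mul, hH.eq]
        simp only [Matrix.mul_sub, trace_sub, Matrix.mul_assoc]
    _ = 0 := by rw [trace_mul_cycle (Uᵀ * H * U) (Uᵀ * U), sub_self]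

theorem trace_transpose_mul_self_sub_trace_transpose_mul [DecidableEq k] {H : Matrix m m R}
    (hH : H.IsSymm) (U : Matrix m k R) :
    trace ((H * U - U * (Uᵀ * H * U))ᵀ * (H * U - U * (Uᵀ * H * U)))
        - trace ((H * U)ᵀ * (H * U - U * (Uᵀ * H * U)))
      = -trace ((Uᵀ * H * U) ^ 2 * (1 - Uᵀ * U)) := by
  have hA := isSymm_transpose_mul_mul U hH
  calc trace ((H * U - U * (Uᵀ * H * U))ᵀ * (H * U - U * (Uᵀ * H * U)))
        - trace ((H * U)ᵀ * (H * U - U * (Uᵀ * H * U)))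
      = -trace ((Uᵀ * H * U) * Uᵀ * (H * U - U * (Uᵀ * H * U))) := by
        rw [← trace_sub, ← Matrix.sub_mul, transpose_sub, transpose_mul U, hA.eq,
          sub_sub_cancel_left, Matrix.neg_mul, trace_neg]
    _ = -(trace ((Uᵀ * H * U) * (Uᵀ * H * U))
          - trace ((Uᵀ * H * U) * (Uᵀ * U) * (Uᵀ * H * U))) := by
        simp only [Matrix.mul_sub, trace_sub, Matrix.mul_assoc]
    _ = -trace ((Uᵀ * H * U) ^ 2 * (1 - Uᵀ * U)) := by
        rw [trace_mul_cycle _ (Uᵀ * U), sq, Matrix.mul_sub, Matrix.mul_one, trace_sub]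

end Matrix

/-- With `∇_G E(U) = HU − U UᵀHU` and `∇_{G̃}E(U) = HU(UᵀU) − U(UᵀHU)`:
`‖∇_G E(U)‖² − tr((HU)ᵀ∇_G E(U)) = −tr[(UᵀHU)²(I − UᵀU)] − tr((HU)ᵀUUᵀ∇_{G̃}E(U))`,
and the last trace vanishes. -/
theorem stmt_11 {n N : ℕ} (H : Matrix (Fin n) (Fin n) ℝ) (hH : H.IsSymm)
    (U : Matrix (Fin n) (Fin N) ℝ) :
    (frobNorm (H * U - U * (Uᵀ * H * U))) ^ 2
        - Matrix.trace ((H * U)ᵀ * (H * U - U * (Uᵀ * H * U)))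
      = -Matrix.trace ((Uᵀ * H * U) ^ 2 * (1 - Uᵀ * U))
        - Matrix.trace ((H * U)ᵀ * U * Uᵀ * (H * U * (Uᵀ * U) - U * (Uᵀ * H * U))) ∧
    Matrix.trace ((H * U)ᵀ * U * Uᵀ * (H * U * (Uᵀ * U) - U * (Uᵀ * H * U))) = 0 ∧
    (frobNorm (H * U - U * (Uᵀ * H * U))) ^ 2
        - Matrix.trace ((H * U)ᵀ * (H * U - U * (Uᵀ * H * U)))
      = -Matrix.trace ((Uᵀ * H * U) ^ 2 * (1 - Uᵀ * U)) := by
  have hmain := frobNorm_sq (H * U - U * (Uᵀ * H * U)) ▸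
    trace_transpose_mul_self_sub_trace_transpose_mul hH U
  have hzero := trace_transpose_mul_mul_transpose_mul_sub_eq_zero hH U
  exact ⟨by rw [hmain, hzero, sub_zero], hzero, hmain⟩
end

section
/- Let H be a real symmetric n×n matrix with eigenvalues λ₁ ≤ … ≤ λ_n and orthonormal eigenvectors v₁,…,v_n, and let v = Σ_j α_j v_j be a unit vector with Σ_j α_j² = 1. Suppose the index set I(v) = {j : α_j ≠ 0 and λ_j < 0} is nonempty and let λ_{j*} = −max{|λ_j| : j ∈ I(v)}. Then the Rayleigh quotient R(t,v) = (vᵀ exp(−2Ht) H v)/(vᵀ exp(−2Ht) v) converges to λ_{j*} as t → ∞. -/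
open Matrix NormedSpace Filter Topology

/-!
In the eigenbasis `exp (s • H)` acts on `V j` by `Real.exp (s * d j)`, so the quotient is the mean
of the `d j` with weights `α j ^ 2 * Real.exp (-2 * t * d j)`. Every `d j` carrying weight is at
least `lam` (the negative ones by minimality, the others because `lam < 0`). Rescaling all weights
by `Real.exp (2 * t * lam)`, those with `d j = lam` stay constant and the others decay, so the mean
tends to `lam`.
-/

theorem Matrix.exp_mulVec_of_mulVec_eq_smul {ι : Type*} [Fintype ι] [DecidableEq ι]
    {A : Matrix ι ι ℝ} {x : ι → ℝ} {c : ℝ} (hx : A *ᵥ x = c • x) :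
    exp A *ᵥ x = Real.exp c • x := by
  -- any matrix norm will do: it only serves to sum the exponential series
  let := Matrix.linftyOpNormedRing (n := ι) (α := ℝ)
  let := Matrix.linftyOpNormedAlgebra (n := ι) (R := ℝ) (α := ℝ)
  have hpow (k : ℕ) : A ^ k *ᵥ x = c ^ k • x := by
    induction k with
    | zero => simp
    | succ k ih => rw [pow_succ', ← mulVec_mulVec, ih, mulVec_smul, hx, smul_smul, pow_succ]
  have hA := (exp_series_hasSum_exp' (𝕂 := ℝ) A).map (mulVec.addMonoidHomLeft x)
    (continuous_id.matrix_mulVec continuous_const)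
  have hc := (exp_series_hasSum_exp' (𝕂 := ℝ) c).smul_const x
  rw [← Real.exp_eq_exp_ℝ] at hc
  refine hA.unique (hc.congr_fun fun k => ?_)
  simp [mulVec.addMonoidHomLeft, smul_mulVec, hpow, smul_smul]

section Eigenbasis

variable {ι R : Type*} [Fintype ι] [CommSemiring R] {V : ι → ι → R}

theorem Matrix.mulVec_sum_smul_of_mulVec_eq_smul {A : Matrix ι ι R} {μ : ι → R}
    (hA : ∀ j, A *ᵥ V j = μ j • V j) (β : ι → R) :
    A *ᵥ ∑ j, β j • V j = ∑ j, (μ j * β j) • V j := by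
  simp only [mulVec_sum, mulVec_smul, hA, smul_smul, mul_comm]

theorem dotProduct_sum_smul_of_orthonormal [DecidableEq ι]
    (hV : ∀ j k, V j ⬝ᵥ V k = if j = k then (1 : R) else 0) (α β : ι → R) :
    (∑ j, α j • V j) ⬝ᵥ (∑ k, β k • V k) = ∑ j, α j * β j := by
  simp [sum_dotProduct, dotProduct_sum, hV, mul_comm]

end Eigenbasis

theorem tendsto_mul_exp_mul_exp {a μ lam : ℝ} (h : a ≠ 0 → lam ≤ μ) :
    Tendsto (fun t => a * Real.exp (-t * μ) * Real.exp (t * lam)) atTop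
      (𝓝 (if μ = lam then a else 0)) := by
  have hrw (t : ℝ) :
      a * Real.exp (-t * μ) * Real.exp (t * lam) = a * Real.exp (-((μ - lam) * t)) := by
    rw [mul_assoc, ← Real.exp_add]; ring_nf
  simp only [hrw]
  split_ifs with hμ
  · simp [hμ]
  rcases eq_or_ne a 0 with rfl | ha
  · simp
  have hpos : 0 < μ - lam := sub_pos.2 ((h ha).lt_of_ne' hμ)
  simpa using (Real.tendsto_exp_neg_atTop_nhds_zero.comp
    (tendsto_id.const_mul_atTop hpos)).const_mul a

theorem tendsto_sum_mul_exp_div_sum_exp {ι : Type*} [Fintype ι] {c d : ι → ℝ} {lam : ℝ}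
    (hc : ∀ j, 0 ≤ c j) (hlow : ∀ j, c j ≠ 0 → lam ≤ d j) (hlam : ∃ j, c j ≠ 0 ∧ d j = lam) :
    Tendsto (fun t => (∑ j, c j * d j * Real.exp (-t * d j)) / ∑ j, c j * Real.exp (-t * d j))
      atTop (𝓝 lam) := by
  classical
  set S := ∑ j, if d j = lam then c j else 0
  have hS : 0 < S := by
    obtain ⟨j₀, hc₀, hd₀⟩ := hlam
    refine Finset.sum_pos' (fun j _ => by split_ifs <;> simp [hc]) ⟨j₀, Finset.mem_univ _, ?_⟩
    rw [if_pos hd₀]; exact (hc j₀).lt_of_ne' hc₀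
  have hnum := tendsto_finsetSum Finset.univ fun j _ =>
    tendsto_mul_exp_mul_exp (a := c j * d j) (μ := d j) (lam := lam)
      fun h => hlow j (left_ne_zero_of_mul h)
  have hden := tendsto_finsetSum Finset.univ fun j _ =>
    tendsto_mul_exp_mul_exp (a := c j) (μ := d j) (lam := lam) (hlow j)
  have hnum_lim : (∑ j, if d j = lam then c j * d j else 0) = lam * S := by
    rw [Finset.mul_sum]
    exact Finset.sum_congr rfl fun j _ => by split_ifs with h <;> simp [h, mul_comm]
  rw [hnum_lim] at hnum
  have := hnum.div hden hS.ne'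
  rw [mul_div_cancel_right₀ _ hS.ne'] at this
  refine this.congr fun t => ?_
  simp only [← Finset.sum_mul]
  exact mul_div_mul_right _ _ (Real.exp_pos _).ne'

theorem stmt_19_general {n : ℕ} (H : Matrix (Fin n) (Fin n) ℝ)
    (d : Fin n → ℝ) (V : Fin n → Fin n → ℝ)
    (horth : ∀ j k : Fin n, V j ⬝ᵥ V k = if j = k then (1:ℝ) else 0)
    (heig : ∀ j : Fin n, H *ᵥ V j = d j • V j)
    (α : Fin n → ℝ) (v : Fin n → ℝ)
    (hv : v = ∑ j : Fin n, α j • V j)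
    (lam : ℝ)
    (hlam : IsLeast {r : ℝ | ∃ j : Fin n, α j ≠ 0 ∧ d j < 0 ∧ r = d j} lam) :
    Tendsto (fun t : ℝ =>
        (v ⬝ᵥ ((exp ((-(2 * t)) • H)) *ᵥ (H *ᵥ v))) /
          (v ⬝ᵥ ((exp ((-(2 * t)) • H)) *ᵥ v)))
      atTop (nhds lam) := by
  obtain ⟨⟨j₀, hα₀, hd₀, rfl⟩, hleast⟩ := hlam
  have hlow (j : Fin n) (hj : α j ^ 2 ≠ 0) : d j₀ ≤ d j := by
    rcases lt_or_ge (d j) 0 with hdj | hdj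
    · exact hleast ⟨j, pow_ne_zero_iff two_ne_zero |>.1 hj, hdj, rfl⟩
    · linarith
  have hexp (s : ℝ) (j : Fin n) : exp (s • H) *ᵥ V j = Real.exp (s * d j) • V j :=
    exp_mulVec_of_mulVec_eq_smul (by rw [smul_mulVec, heig, smul_smul])
  have hlim := tendsto_sum_mul_exp_div_sum_exp (c := fun j => α j ^ 2) (fun j => sq_nonneg _)
    hlow ⟨j₀, pow_ne_zero 2 hα₀, rfl⟩
  refine (hlim.comp (tendsto_id.const_mul_atTop two_pos)).congr fun t => ?_
  simp only [Function.comp_apply, id, hv, mulVec_sum_smul_of_mulVec_eq_smul heig,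
    mulVec_sum_smul_of_mulVec_eq_smul (hexp _), dotProduct_sum_smul_of_orthonormal horth]
  congr 1 <;> exact Finset.sum_congr rfl fun j _ => by ring

/-- Let `H` be real symmetric with orthonormal eigenvectors `V j` and eigenvalues `d j`,
and let `v = ∑ α j • V j` be a unit vector (`∑ α j² = 1`).  If the set
`{d j : α j ≠ 0, d j < 0}` is nonempty with least element `lam` (which equals
`−max{|d j| : j ∈ I(v)}`), then the Rayleigh quotient
`R(t,v) = (vᵀ exp(−2Ht) H v)/(vᵀ exp(−2Ht) v)` converges to `lam` as `t → ∞`. -/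
theorem stmt_19 {n : ℕ} (H : Matrix (Fin n) (Fin n) ℝ) (hH : H.IsSymm)
    (d : Fin n → ℝ) (V : Fin n → Fin n → ℝ)
    (horth : ∀ j k : Fin n, V j ⬝ᵥ V k = if j = k then (1:ℝ) else 0)
    (heig : ∀ j : Fin n, H *ᵥ V j = d j • V j)
    (α : Fin n → ℝ) (v : Fin n → ℝ)
    (hv : v = ∑ j : Fin n, α j • V j)
    (hunit : ∑ j : Fin n, (α j) ^ 2 = 1)
    (lam : ℝ)
    (hlam : IsLeast {r : ℝ | ∃ j : Fin n, α j ≠ 0 ∧ d j < 0 ∧ r = d j} lam) :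
    Tendsto (fun t : ℝ =>
        (v ⬝ᵥ ((exp ((-(2 * t)) • H)) *ᵥ (H *ᵥ v))) /
          (v ⬝ᵥ ((exp ((-(2 * t)) • H)) *ᵥ v)))
      atTop (nhds lam) :=
  stmt_19_general H d V horth heig α v hv lam hlam
end
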